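/- arXiv:2209.11938 — 2 statements merged into one kernel-verified Lean document; each statement's English description precedes it below -/
import Mathlib

section
/- Let F = {v ∈ ℤ⁸ : ⟨v,v⟩ = 0 and ⟨v,h⟩ = 2}. Then F is a finite set of cardinality exactly 126. -/
/-- The lattice ℤ⁸. -/
abbrev V : Type := Fin 8 → ℤ

/-- The bilinear form with Gram matrix diag(1,−1,…,−1). -/
def B (v w : V) : ℤ := v 0 * w 0 - ∑ i : Fin 7, v i.succ * w i.succ

/-- The class h = (3,−1,…,−1) with ⟨h,h⟩ = 2. -/
def hh : V := ![3, -1, -1, -1, -1, -1, -1, -1]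

/-- The involution ι(v) = ⟨v,h⟩·h − v. -/
def iota (v : V) : V := B v hh • hh - v

/-- L = {v : ⟨v,v⟩ = −1, ⟨v,h⟩ = 1}. -/
def L : Set V := {v | B v v = -1 ∧ B v hh = 1}

/-- F = {v : ⟨v,v⟩ = 0, ⟨v,h⟩ = 2}. -/
def F : Set V := {v | B v v = 0 ∧ B v hh = 2}

/-- L̄ = L/⟨ι⟩, realized as the set of ι-orbits. -/
def Lbar : Set (Set V) := {p | ∃ v ∈ L, p = {v, iota v}}

/-- F̄ = F/⟨ι⟩, realized as the set of ι-orbits. -/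
def Fbar : Set (Set V) := {p | ∃ v ∈ F, p = {v, iota v}}

/-- G = {g ∈ GL₈(ℤ) : g preserves B and g(h) = h}. -/
def G : Subgroup (V ≃ₗ[ℤ] V) where
  carrier := {g | (∀ v w : V, B (g v) (g w) = B v w) ∧ g hh = hh}
  one_mem' := ⟨fun _ _ => rfl, rfl⟩
  mul_mem' := by
    rintro a b ⟨ha1, ha2⟩ ⟨hb1, hb2⟩
    refine ⟨fun v w => ?_, ?_⟩
    · show B (a (b v)) (a (b w)) = B v w
      rw [ha1, hb1]
    · show a (b hh) = hh
      rw [hb2, ha2]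
  inv_mem' := by
    rintro a ⟨ha1, ha2⟩
    refine ⟨fun v w => ?_, ?_⟩
    · show B (a.symm v) (a.symm w) = B v w
      conv_rhs => rw [← a.apply_symm_apply v, ← a.apply_symm_apply w]
      rw [ha1]
    · show a.symm hh = hh
      conv_lhs => rw [← ha2]
      exact a.symm_apply_apply hh

/-! Writing `v = (a, c₁, …, c₇)`, membership in `F` says `∑ cᵢ² = a²` and `∑ cᵢ = 2 - 3a`.
Cauchy–Schwarz for all seven `cᵢ` gives `(a - 3)² ≤ 7`, and for the six `cᵢ` other than `c_j`
it gives `(c_j + 1)² ≤ 3`. So `F` lies in the box `[1, 5] × [-2, 0]⁷`, where its elements are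
counted by evaluation in the kernel: `7 + 35 + 42 + 35 + 7` of them for `a = 1, …, 5`. -/

open Finset

lemma B_self (v : V) : B v v = v 0 ^ 2 - ∑ i : Fin 7, v i.succ ^ 2 := by
  simp only [B, sq]

lemma B_hh (v : V) : B v hh = 3 * v 0 + ∑ i : Fin 7, v i.succ := by
  have hh_succ : ∀ i : Fin 7, hh i.succ = -1 := by decide
  simp only [B, hh_succ, mul_neg_one, sum_neg_distrib, sub_neg_eq_add]
  rw [show hh 0 = 3 from rfl, mul_comm]

lemma mem_F_iff (v : V) :
    v ∈ F ↔ ∑ i : Fin 7, v i.succ ^ 2 = v 0 ^ 2 ∧ ∑ i : Fin 7, v i.succ = 2 - 3 * v 0 := by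
  simp only [F, Set.mem_ofPred_eq, B_self, B_hh]
  constructor <;> rintro ⟨h₁, h₂⟩ <;> constructor <;> linarith

lemma apply_zero_mem_Icc_of_mem_F {v : V} (hv : v ∈ F) : v 0 ∈ Icc 1 5 := by
  obtain ⟨hsq, hsum⟩ := (mem_F_iff v).1 hv
  have cs := sq_sum_le_card_mul_sum_sq (s := univ) (f := fun i : Fin 7 => v i.succ)
  simp only [card_univ, Fintype.card_fin, hsq, hsum, Nat.cast_ofNat] at cs
  have key : (v 0 - 3) ^ 2 < 3 ^ 2 := by nlinarith
  have := abs_lt_of_sq_lt_sq' key (by norm_num)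
  rw [mem_Icc]
  omega

lemma apply_succ_mem_Icc_of_mem_F {v : V} (hv : v ∈ F) (j : Fin 7) : v j.succ ∈ Icc (-2) 0 := by
  obtain ⟨hsq, hsum⟩ := (mem_F_iff v).1 hv
  have cs := sq_sum_le_card_mul_sum_sq (s := univ.erase j) (f := fun i : Fin 7 => v i.succ)
  simp only [card_erase_of_mem (mem_univ j), card_univ, Fintype.card_fin,
    sum_erase_eq_sub (mem_univ j), hsq, hsum] at cs
  push_cast at cs
  -- `cs` rearranges to `3 (v 0 + v j.succ - 2) ^ 2 + 4 ((v j.succ + 1) ^ 2 - 3) ≤ 0`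
  have key : (v j.succ + 1) ^ 2 < 2 ^ 2 := by nlinarith [sq_nonneg (v 0 + v j.succ - 2)]
  have := abs_lt_of_sq_lt_sq' key (by norm_num)
  rw [mem_Icc]
  omega

noncomputable def boundingBox : Finset V :=
  Fintype.piFinset fun i => if i = 0 then Icc 1 5 else Icc (-2) 0

lemma F_subset_boundingBox : F ⊆ boundingBox := by
  intro v hv
  rw [mem_coe, boundingBox, Fintype.mem_piFinset]
  intro i
  cases i using Fin.cases with
  | zero => exact apply_zero_mem_Icc_of_mem_F hv
  | succ j => simpa [Fin.succ_ne_zero] using apply_succ_mem_Icc_of_mem_F hv j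

lemma F_eq_filter : F = ↑(boundingBox.filter fun v => B v v = 0 ∧ B v hh = 2) := by
  ext v
  rw [coe_filter]
  exact ⟨fun hv => ⟨F_subset_boundingBox hv, hv⟩, And.right⟩

lemma card_filter_boundingBox :
    (boundingBox.filter fun v => B v v = 0 ∧ B v hh = 2).card = 126 := by
  decide +kernel

/-- F is a finite set of cardinality exactly 126. -/
theorem stmt1 : F.Finite ∧ F.ncard = 126 := by
  rw [F_eq_filter, Set.ncard_coe_finset, card_filter_boundingBox]
  exact ⟨finite_toSet _, rfl⟩
end

section
/- Let Σ = {v ∈ ℤ⁸ : ⟨v,h⟩ = 0} be the orthogonal complement of h, equipped with the restriction of the bilinear form. Then every isometry of the lattice Σ extends uniquely to an element of G, i.e., the restriction homomorphism G → O(Σ) is a group isomorphism. -/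
/-- Σ = the orthogonal complement of h in ℤ⁸, as a ℤ-submodule. -/
def Sig : Submodule ℤ V where
  carrier := {v | B v hh = 0}
  zero_mem' := by simp [B]
  add_mem' := by
    intro a b ha hb
    simp only [Set.mem_setOf_eq, B, Pi.add_apply, add_mul,
      Finset.sum_add_distrib] at *
    linarith
  smul_mem' := by
    intro c v hv
    simp only [Set.mem_setOf_eq, B, Pi.smul_apply, smul_eq_mul] at *
    have hs : ∑ i : Fin 7, c * v i.succ * hh i.succ
        = c * ∑ i : Fin 7, v i.succ * hh i.succ := by
      rw [Finset.mul_sum]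
      exact Finset.sum_congr rfl fun i _ => mul_assoc _ _ _
    rw [hs]
    linear_combination c * hv


section Stmt3Aux

private def ee1 : V := ![0,1,0,0,0,0,0,0]
private def ss0 : V := ![-3,3,1,1,1,1,1,1]

private lemma B_ex (v w : V) :
    B v w = v 0 * w 0 - v 1 * w 1 - v 2 * w 2 - v 3 * w 3 - v 4 * w 4
      - v 5 * w 5 - v 6 * w 6 - v 7 * w 7 := by
  show v 0 * w 0 - ∑ i : Fin 7, v i.succ * w i.succ = _
  rw [Fin.sum_univ_seven]
  norm_num [show ((0:Fin 7).succ) = 1 from rfl, show ((1:Fin 7).succ) = 2 from rfl,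
    show ((2:Fin 7).succ) = 3 from rfl, show ((3:Fin 7).succ) = 4 from rfl,
    show ((4:Fin 7).succ) = 5 from rfl, show ((5:Fin 7).succ) = 6 from rfl,
    show ((6:Fin 7).succ) = 7 from rfl]
  ring

private lemma B_vec (y : V) (a b c d e f g h : ℤ) :
    B y ![a,b,c,d,e,f,g,h] = y 0 * a - y 1 * b - y 2 * c - y 3 * d - y 4 * e
      - y 5 * f - y 6 * g - y 7 * h := by
  rw [B_ex]; rfl

private lemma B_hh_right (v : V) :
    B v hh = 3 * v 0 + v 1 + v 2 + v 3 + v 4 + v 5 + v 6 + v 7 := by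
  rw [show hh = ![3,-1,-1,-1,-1,-1,-1,-1] from rfl, B_vec]; ring

private lemma B_comm (v w : V) : B v w = B w v := by rw [B_ex, B_ex]; ring

private lemma B_add_left (u v w : V) : B (u + v) w = B u w + B v w := by
  simp only [B_ex, Pi.add_apply]; ring

private lemma B_add_right (u v w : V) : B u (v + w) = B u v + B u w := by
  simp only [B_ex, Pi.add_apply]; ring

private lemma B_sub_left (u v w : V) : B (u - v) w = B u w - B v w := by
  simp only [B_ex, Pi.sub_apply]; ring

private lemma B_sub_right (u v w : V) : B u (v - w) = B u v - B u w := by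
  simp only [B_ex, Pi.sub_apply]; ring

private lemma B_smul_left (c : ℤ) (v w : V) : B (c • v) w = c * B v w := by
  simp only [B_ex, Pi.smul_apply, smul_eq_mul]; ring

private lemma B_smul_right (c : ℤ) (v w : V) : B v (c • w) = c * B v w := by
  simp only [B_ex, Pi.smul_apply, smul_eq_mul]; ring

private lemma ss0_mem : ss0 ∈ Sig := show B ss0 hh = 0 by decide

private def ss0b : Sig := ⟨ss0, ss0_mem⟩

private lemma B_ss0_right (t : V) (ht : B t hh = 0) : B ss0 t = -2 * t 1 := by
  rw [B_hh_right] at ht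
  rw [show B ss0 t = B t ss0 from B_comm ss0 t,
    show ss0 = ![(-3 : ℤ),3,1,1,1,1,1,1] from rfl, B_vec]
  linarith

private lemma B_ee1_left (v : V) : B ee1 v = -(v 1) := by
  rw [show B ee1 v = B v ee1 from B_comm ee1 v,
    show ee1 = ![(0:ℤ),1,0,0,0,0,0,0] from rfl, B_vec]
  ring

private lemma B_ee1_hh : B ee1 hh = 1 := by decide

private def Bh : V →ₗ[ℤ] ℤ where
  toFun v := B v hh
  map_add' u v := B_add_left u v hh
  map_smul' c v := B_smul_left c v hh

private lemma proj_mem (v : V) : v - B v hh • ee1 ∈ Sig := by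
  show B _ hh = 0
  rw [B_sub_left, B_smul_left, B_ee1_hh]; ring

private def proj : V →ₗ[ℤ] Sig where
  toFun v := ⟨v - B v hh • ee1, proj_mem v⟩
  map_add' u v := Subtype.ext (by
    show (u + v) - B (u + v) hh • ee1 = (u - B u hh • ee1) + (v - B v hh • ee1)
    rw [B_add_left, add_smul]; abel)
  map_smul' c v := Subtype.ext (by
    show (c • v) - B (c • v) hh • ee1 = c • (v - B v hh • ee1)
    rw [B_smul_left, smul_sub, smul_smul])

private lemma proj_coe (v : V) : ((proj v : Sig) : V) = v - B v hh • ee1 := rfl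

private def glin (σ : Sig ≃ₗ[ℤ] Sig) (w : V) : V →ₗ[ℤ] V :=
  Bh.smulRight w + (Sig.subtype ∘ₗ σ.toLinearMap ∘ₗ proj)

private lemma glin_apply (σ : Sig ≃ₗ[ℤ] Sig) (w : V) (v : V) :
    glin σ w v = B v hh • w + ((σ (proj v) : Sig) : V) := rfl

private lemma ss0_eq : ss0 = (2:ℤ) • ee1 - hh := by decide

private lemma B_w_hh (σ : Sig ≃ₗ[ℤ] Sig) (w : V)
    (hw : (2:ℤ) • w = hh + ((σ ss0b : Sig) : V)) : B w hh = 1 := by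
  have hy : B ((σ ss0b : Sig) : V) hh = 0 := (σ ss0b).2
  have h2 : B ((2:ℤ) • w) hh = 2 := by
    rw [hw, B_add_left, hy, show B hh hh = 2 from by decide]
    norm_num
  rw [B_smul_left] at h2; linarith

private lemma glin_comp (σ : Sig ≃ₗ[ℤ] Sig) (w w' : V)
    (hw : (2:ℤ) • w = hh + ((σ ss0b : Sig) : V))
    (hw' : (2:ℤ) • w' = hh + ((σ.symm ss0b : Sig) : V)) (v : V) :
    glin σ w (glin σ.symm w' v) = v := by
  have hBw' : B w' hh = 1 := B_w_hh σ.symm w' hw'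
  have hsv : B ((σ.symm (proj v) : Sig) : V) hh = 0 := (σ.symm (proj v)).2
  have hb : B (glin σ.symm w' v) hh = B v hh := by
    rw [glin_apply, B_add_left, B_smul_left, hBw', hsv]; ring
  have hproj2 : (2:ℤ) • proj (glin σ.symm w' v)
      = (-(B v hh)) • ss0b + (B v hh) • σ.symm ss0b + (2:ℤ) • σ.symm (proj v) := by
    apply Subtype.ext
    show (2:ℤ) • ((glin σ.symm w' v) - B (glin σ.symm w' v) hh • ee1)
      = (-(B v hh)) • ss0 + (B v hh) • ((σ.symm ss0b : Sig) : V)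
        + (2:ℤ) • ((σ.symm (proj v) : Sig) : V)
    rw [hb, glin_apply]
    funext i
    have h1 := congrFun hw' i
    have h2 := congrFun ss0_eq i
    simp only [Pi.add_apply, Pi.sub_apply, Pi.smul_apply, Pi.neg_apply,
      smul_eq_mul] at h1 h2 ⊢
    rw [h2]
    linear_combination (B v hh) * h1
  refine smul_right_injective V (by norm_num : (2:ℤ) ≠ 0) ?_
  show (2:ℤ) • glin σ w (glin σ.symm w' v) = (2:ℤ) • v
  rw [glin_apply, smul_add, hb, smul_comm (2:ℤ) (B v hh) w, hw]
  have hs2 : (2:ℤ) • ((σ (proj (glin σ.symm w' v)) : Sig) : V)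
      = (-(B v hh)) • ((σ ss0b : Sig) : V) + (B v hh) • ss0
        + (2:ℤ) • ((proj v : Sig) : V) := by
    have e1 : (2:ℤ) • ((σ (proj (glin σ.symm w' v)) : Sig) : V)
        = ((σ ((2:ℤ) • proj (glin σ.symm w' v)) : Sig) : V) := by
      rw [map_smul]; rfl
    rw [e1, hproj2, map_add, map_add, map_smul, map_smul, map_smul,
      σ.apply_symm_apply, σ.apply_symm_apply]
    rfl
  rw [hs2, proj_coe]
  funext i
  have h2 := congrFun ss0_eq i
  simp only [Pi.add_apply, Pi.sub_apply, Pi.smul_apply, Pi.neg_apply,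
    smul_eq_mul] at h2 ⊢
  rw [h2]; ring

private lemma B_proj_proj (v u : V) :
    B ((proj v : Sig) : V) ((proj u : Sig) : V)
      = B v u + B v hh * u 1 + B u hh * v 1 - B v hh * B u hh := by
  rw [proj_coe, proj_coe]
  simp only [B_sub_left, B_sub_right, B_smul_left, B_smul_right,
    B_comm v ee1, B_comm u ee1, B_ee1_left, show ee1 1 = 1 from rfl]
  ring

private lemma glin_isom (σ : Sig ≃ₗ[ℤ] Sig)
    (hσ : ∀ v w : Sig, B ((σ v : Sig) : V) ((σ w : Sig) : V) = B (v : V) (w : V))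
    (w : V) (hw : (2:ℤ) • w = hh + ((σ ss0b : Sig) : V)) (v u : V) :
    B (glin σ w v) (glin σ w u) = B v u := by
  set y : V := ((σ ss0b : Sig) : V) with hydef
  have hy : B y hh = 0 := (σ ss0b).2
  have e2 : (2:ℤ) • glin σ w v
      = B v hh • (hh + y) + (2:ℤ) • ((σ (proj v) : Sig) : V) := by
    rw [glin_apply, smul_add, smul_comm (2:ℤ) (B v hh) w, hw]
  have e2' : (2:ℤ) • glin σ w u
      = B u hh • (hh + y) + (2:ℤ) • ((σ (proj u) : Sig) : V) := by
    rw [glin_apply, smul_add, smul_comm (2:ℤ) (B u hh) w, hw]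
  have e4 : B ((2:ℤ) • glin σ w v) ((2:ℤ) • glin σ w u)
      = 4 * B (glin σ w v) (glin σ w u) := by
    rw [B_smul_left, B_smul_right]; ring
  have hpv : B ((σ (proj v) : Sig) : V) hh = 0 := (σ (proj v)).2
  have hpu : B ((σ (proj u) : Sig) : V) hh = 0 := (σ (proj u)).2
  have hyy : B y y = -6 := by
    have h := hσ ss0b ss0b
    rw [← hydef] at h
    rw [h]; decide
  have hypu : B y ((σ (proj u) : Sig) : V) = -2 * (u 1 - B u hh) := by
    have h := hσ ss0b (proj u)
    rw [← hydef] at h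
    rw [h, show ((ss0b : Sig) : V) = ss0 from rfl, B_ss0_right _ (proj u).2, proj_coe]
    simp only [Pi.sub_apply, Pi.smul_apply, smul_eq_mul,
      show ee1 1 = 1 from rfl]
    ring
  have hypv : B y ((σ (proj v) : Sig) : V) = -2 * (v 1 - B v hh) := by
    have h := hσ ss0b (proj v)
    rw [← hydef] at h
    rw [h, show ((ss0b : Sig) : V) = ss0 from rfl, B_ss0_right _ (proj v).2, proj_coe]
    simp only [Pi.sub_apply, Pi.smul_apply, smul_eq_mul,
      show ee1 1 = 1 from rfl]
    ring
  have hpp : B ((σ (proj v) : Sig) : V) ((σ (proj u) : Sig) : V)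
      = B v u + B v hh * u 1 + B u hh * v 1 - B v hh * B u hh := by
    rw [hσ (proj v) (proj u), B_proj_proj]
  have hyhh : B hh y = 0 := by rw [B_comm]; exact hy
  have hpv' : B hh ((σ (proj v) : Sig) : V) = 0 := by rw [B_comm]; exact hpv
  have hpu' : B hh ((σ (proj u) : Sig) : V) = 0 := by rw [B_comm]; exact hpu
  have hypv' : B ((σ (proj v) : Sig) : V) y = -2 * (v 1 - B v hh) := by
    rw [B_comm]; exact hypv
  have hypu' : B ((σ (proj u) : Sig) : V) y = -2 * (u 1 - B u hh) := by
    rw [B_comm]; exact hypu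
  have expand : B ((2:ℤ) • glin σ w v) ((2:ℤ) • glin σ w u) = 4 * B v u := by
    rw [e2, e2']
    simp only [B_add_left, B_add_right, B_smul_left, B_smul_right]
    simp only [hpp, show B hh hh = 2 from by decide, hy, hyhh, hyy, hypu, hypv,
      hypu', hypv', hpv, hpu, hpv', hpu']
    ring
  rw [expand] at e4
  linarith

private lemma glin_hh (σ : Sig ≃ₗ[ℤ] Sig) (w : V)
    (hw : (2:ℤ) • w = hh + ((σ ss0b : Sig) : V)) : glin σ w hh = hh := by
  rw [glin_apply, show B hh hh = 2 from by decide]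
  have hp : proj hh = -ss0b := Subtype.ext (by
    show hh - B hh hh • ee1 = -ss0
    rw [show B hh hh = 2 from by decide]; decide)
  rw [hp, map_neg, show (((-(σ ss0b)) : Sig) : V) = -((σ ss0b : Sig) : V) from rfl, hw]
  abel

private lemma glin_restrict (σ : Sig ≃ₗ[ℤ] Sig) (w : V) (v : Sig) :
    glin σ w (v : V) = ((σ v : Sig) : V) := by
  have h0 : B (v : V) hh = 0 := v.2
  have hp : proj (v : V) = v := Subtype.ext (by
    show (v : V) - B (v : V) hh • ee1 = (v : V)
    rw [h0]; simp)
  rw [glin_apply, h0, hp]; simp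

set_option maxHeartbeats 1600000 in
private lemma exists_w (σ : Sig ≃ₗ[ℤ] Sig)
    (hσ : ∀ v w : Sig, B ((σ v : Sig) : V) ((σ w : Sig) : V) = B (v : V) (w : V)) :
    ∃ w : V, (2:ℤ) • w = hh + ((σ ss0b : Sig) : V) := by
  set y : V := ((σ ss0b : Sig) : V) with hydef
  have hy : B y hh = 0 := (σ ss0b).2
  have key : ∀ t : V, B t hh = 0 → ∃ k, B y t = 2 * k := by
    intro t ht
    have h2 := hσ ss0b (σ.symm ⟨t, ht⟩)
    rw [σ.apply_symm_apply, ← hydef] at h2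
    have h3 : B y t = B ss0 ((σ.symm ⟨t, ht⟩ : Sig) : V) := h2
    rw [h3, B_ss0_right _ (σ.symm ⟨t, ht⟩).2]
    exact ⟨-((σ.symm ⟨t, ht⟩ : Sig) : V) 1, by ring⟩
  obtain ⟨k1, hk1⟩ := key ![0,1,-1,0,0,0,0,0] (by decide)
  obtain ⟨k2, hk2⟩ := key ![0,0,1,-1,0,0,0,0] (by decide)
  obtain ⟨k3, hk3⟩ := key ![0,0,0,1,-1,0,0,0] (by decide)
  obtain ⟨k4, hk4⟩ := key ![0,0,0,0,1,-1,0,0] (by decide)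
  obtain ⟨k5, hk5⟩ := key ![0,0,0,0,0,1,-1,0] (by decide)
  obtain ⟨k6, hk6⟩ := key ![0,0,0,0,0,0,1,-1] (by decide)
  obtain ⟨k7, hk7⟩ := key ![1,-3,0,0,0,0,0,0] (by decide)
  rw [B_vec] at hk1 hk2 hk3 hk4 hk5 hk6 hk7
  have m1 : y 2 - y 1 = 2 * k1 := by linarith
  have m2 : y 3 - y 2 = 2 * k2 := by linarith
  have m3 : y 4 - y 3 = 2 * k3 := by linarith
  have m4 : y 5 - y 4 = 2 * k4 := by linarith
  have m5 : y 6 - y 5 = 2 * k5 := by linarith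
  have m6 : y 7 - y 6 = 2 * k6 := by linarith
  have m7 : y 0 + 3 * y 1 = 2 * k7 := by linarith
  clear hk1 hk2 hk3 hk4 hk5 hk6 hk7 key
  by_cases hpar : 2 ∣ y 1
  · exfalso
    have hyz : y = (2:ℤ) • ((fun i => y i / 2) : V) := by
      funext i
      fin_cases i
      · show y 0 = 2 * (y 0 / 2); omega
      · show y 1 = 2 * (y 1 / 2); omega
      · show y 2 = 2 * (y 2 / 2); omega
      · show y 3 = 2 * (y 3 / 2); omega
      · show y 4 = 2 * (y 4 / 2); omega
      · show y 5 = 2 * (y 5 / 2); omega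
      · show y 6 = 2 * (y 6 / 2); omega
      · show y 7 = 2 * (y 7 / 2); omega
    have hy' : 3 * y 0 + y 1 + y 2 + y 3 + y 4 + y 5 + y 6 + y 7 = 0 := by
      rw [B_hh_right] at hy; exact hy
    have hzmem : ((fun i => y i / 2) : V) ∈ Sig := by
      show B ((fun i => y i / 2) : V) hh = 0
      rw [B_hh_right]
      show 3 * (y 0 / 2) + y 1 / 2 + y 2 / 2 + y 3 / 2 + y 4 / 2 + y 5 / 2
        + y 6 / 2 + y 7 / 2 = 0
      omega
    have hYs : σ ss0b = (2:ℤ) • (⟨(fun i => y i / 2), hzmem⟩ : Sig) := by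
      apply Subtype.ext
      show ((σ ss0b : Sig) : V) = (2:ℤ) • ((fun i => y i / 2) : V)
      rw [← hydef]; exact hyz
    have h5 := congrArg σ.symm hYs
    rw [σ.symm_apply_apply, map_smul] at h5
    have h6 := congrArg (fun t : Sig => (t : V) 2) h5
    have h7 : (1:ℤ) = 2 * ((σ.symm ⟨(fun i => y i / 2), hzmem⟩ : Sig) : V) 2 := h6
    omega
  · refine ⟨fun i => (hh i + y i) / 2, ?_⟩
    funext i
    fin_cases i
    · show 2 * (((3:ℤ) + y 0) / 2) = 3 + y 0
      omega
    · show 2 * (((-1:ℤ) + y 1) / 2) = -1 + y 1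
      omega
    · show 2 * (((-1:ℤ) + y 2) / 2) = -1 + y 2
      omega
    · show 2 * (((-1:ℤ) + y 3) / 2) = -1 + y 3
      omega
    · show 2 * (((-1:ℤ) + y 4) / 2) = -1 + y 4
      omega
    · show 2 * (((-1:ℤ) + y 5) / 2) = -1 + y 5
      omega
    · show 2 * (((-1:ℤ) + y 6) / 2) = -1 + y 6
      omega
    · show 2 * (((-1:ℤ) + y 7) / 2) = -1 + y 7
      omega

private lemma two_smul_glin (σ : Sig ≃ₗ[ℤ] Sig) (w : V)
    (hw : (2:ℤ) • w = hh + ((σ ss0b : Sig) : V)) (v : V) :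
    (2:ℤ) • glin σ w v
      = B v hh • (hh + ((σ ss0b : Sig) : V)) + (2:ℤ) • ((σ (proj v) : Sig) : V) := by
  rw [glin_apply, smul_add, smul_comm (2:ℤ) (B v hh) w, hw]

private lemma two_smul_ext (σ : Sig ≃ₗ[ℤ] Sig) (g : V ≃ₗ[ℤ] V)
    (hg2 : g hh = hh) (hg3 : ∀ v : Sig, g (v : V) = ((σ v : Sig) : V)) (v : V) :
    (2:ℤ) • g v
      = B v hh • (hh + ((σ ss0b : Sig) : V)) + (2:ℤ) • ((σ (proj v) : Sig) : V) := by
  have hv : (2:ℤ) • v = B v hh • ((2:ℤ) • ee1) + (2:ℤ) • ((proj v : Sig) : V) := by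
    rw [proj_coe]
    funext i
    simp only [Pi.add_apply, Pi.smul_apply, Pi.sub_apply, smul_eq_mul]
    ring
  calc (2:ℤ) • g v = g ((2:ℤ) • v) := (map_smul g 2 v).symm
  _ = B v hh • g ((2:ℤ) • ee1) + (2:ℤ) • g ((proj v : Sig) : V) := by
      rw [hv, map_add, map_smul, map_smul, map_smul]
  _ = _ := by
      rw [show (2:ℤ) • ee1 = hh + ss0 from by decide, map_add, hg2,
        show g ss0 = ((σ ss0b : Sig) : V) from hg3 ss0b, hg3 (proj v)]

end Stmt3Aux

/-- every g ∈ G restricts to an isometry of Σ, and every isometry of the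
lattice Σ extends uniquely to an element of G; i.e. restriction G → O(Σ) is a group
isomorphism. -/
theorem stmt3 :
    (∀ g : V ≃ₗ[ℤ] V, g ∈ G → ∀ v : V, v ∈ Sig → g v ∈ Sig) ∧
    (∀ σ : Sig ≃ₗ[ℤ] Sig, (∀ v w : Sig, B (σ v : V) (σ w : V) = B (v : V) (w : V)) →
      ∃! g : V ≃ₗ[ℤ] V, g ∈ G ∧ ∀ v : Sig, g (v : V) = (σ v : V)) := by
  constructor
  · intro g hg v hv
    show B (g v) hh = 0
    have h1 := hg.1 v hh
    rw [hg.2] at h1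
    rw [h1]; exact hv
  · intro σ hσ
    obtain ⟨w, hw⟩ := exists_w σ hσ
    have hσ' : ∀ v u : Sig, B ((σ.symm v : Sig) : V) ((σ.symm u : Sig) : V)
        = B (v : V) (u : V) := by
      intro v u
      have h := hσ (σ.symm v) (σ.symm u)
      rw [σ.apply_symm_apply, σ.apply_symm_apply] at h
      exact h.symm
    obtain ⟨w', hw'⟩ := exists_w σ.symm hσ'
    have hw2 : (2:ℤ) • w = hh + ((σ.symm.symm ss0b : Sig) : V) := by
      rw [LinearEquiv.symm_symm]; exact hw
    refine ⟨LinearEquiv.ofLinear (glin σ w) (glin σ.symm w')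
      (LinearMap.ext fun v => glin_comp σ w w' hw hw' v)
      (LinearMap.ext fun v => glin_comp σ.symm w' w hw' hw2 v),
      ⟨⟨fun v u => glin_isom σ hσ w hw v u, glin_hh σ w hw⟩,
        fun v => glin_restrict σ w v⟩, ?_⟩
    rintro g' ⟨⟨hg1, hg2⟩, hg3⟩
    refine LinearEquiv.ext fun v => ?_
    refine smul_right_injective V (by norm_num : (2:ℤ) ≠ 0) ?_
    show (2:ℤ) • g' v = (2:ℤ) • glin σ w v
    rw [two_smul_ext σ g' hg2 hg3 v, two_smul_glin σ w hw v]
end
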